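/- Let S be a right LCM monoid with generalized scale N. An element s ∈ S satisfies N_s ∈ Irr N(S) if and only if s is noncore irreducible, i.e., s ∉ S_c and whenever sa = tr with a ∈ S_c and t, r ∈ S, then t ∈ S_c or r ∈ S_c. -/
import Mathlib


variable {S : Type*}

/-- The principal right ideal `sS` of a monoid. -/
def rIdeal [Monoid S] (s : S) : Set S := {x | ∃ r : S, x = s * r}

/-- A right LCM monoid: left cancellative, and any intersection of two principal
right ideals is empty or again a principal right ideal. -/
def IsRightLCMMonoid (S : Type*) [Monoid S] : Prop :=
  (∀ a b c : S, a * b = a * c → b = c) ∧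
  (∀ s t : S, rIdeal s ∩ rIdeal t = (∅ : Set S) ∨ ∃ r : S, rIdeal s ∩ rIdeal t = rIdeal r)

/-- The core of a right LCM monoid. -/
def core (S : Type*) [Monoid S] : Set S := {a | ∀ s : S, (rIdeal a ∩ rIdeal s).Nonempty}

/-- Core equivalence: `s ∼ t` iff `s * a = t * b` for some core elements `a, b`. -/
def coreEquiv [Monoid S] (s t : S) : Prop :=
  ∃ a ∈ core S, ∃ b ∈ core S, s * a = t * b

/-- A generalized scale on a right LCM monoid. -/
def IsGenScale [Monoid S] (N : S →* ℕ+) : Prop :=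
  (∃ s : S, N s ≠ 1) ∧
  (∀ n : ℕ+, (∃ s : S, N s = n) →
    Nat.card (Quot (fun x y : {s : S // N s = n} => coreEquiv x.1 y.1)) = (n : ℕ)) ∧
  (∀ s t : S, N s = N t → coreEquiv s t ∨ rIdeal s ∩ rIdeal t = (∅ : Set S)) ∧
  (∀ (s : S) (n : ℕ+), (∃ u : S, N u = n) →
    ∃ t : S, N t = n ∧ (rIdeal s ∩ rIdeal t).Nonempty)

/-- Irreducibility of an element of the image submonoid `N(S) ⊆ ℕ^×`. -/
def IrrInScale [Monoid S] (N : S →* ℕ+) (n : ℕ+) : Prop :=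
  n ≠ 1 ∧ ∀ k l : ℕ+, (∃ u : S, N u = k) → (∃ v : S, N v = l) → n = k * l → k = 1 ∨ l = 1

/-- Noncore irreducible elements of a right LCM monoid. -/
def NoncoreIrred [Monoid S] (s : S) : Prop :=
  s ∉ core S ∧ ∀ a ∈ core S, ∀ t r : S, s * a = t * r → t ∈ core S ∨ r ∈ core S

section Aux

variable [Monoid S]

lemma core_one' : (1 : S) ∈ core S :=
  fun s => ⟨s, ⟨s, (one_mul s).symm⟩, ⟨1, (mul_one s).symm⟩⟩

lemma core_mul' {a b : S} (ha : a ∈ core S) (hb : b ∈ core S) : a * b ∈ core S := by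
  intro s
  obtain ⟨x, ⟨m, hm⟩, ⟨k, hk⟩⟩ := ha s
  obtain ⟨y, ⟨p, hp⟩, ⟨q, hq⟩⟩ := hb m
  refine ⟨a * b * p, ⟨p, rfl⟩, ⟨k * q, ?_⟩⟩
  rw [mul_assoc a b p, ← hp, hq, ← mul_assoc, ← hm, hk, mul_assoc]

lemma coreEquiv_refl (s : S) : coreEquiv s s := ⟨1, core_one', 1, core_one', rfl⟩

lemma coreEquiv_symm {s t : S} : coreEquiv s t → coreEquiv t s :=
  fun ⟨a, ha, b, hb, h⟩ => ⟨b, hb, a, ha, h.symm⟩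

lemma coreEquiv_trans (hS : IsRightLCMMonoid S) {s t u : S} :
    coreEquiv s t → coreEquiv t u → coreEquiv s u := by
  rintro ⟨a, ha, b, hb, hab⟩ ⟨c, hc, d, hd, hcd⟩
  rcases hS.2 b c with hemp | ⟨r, hr⟩
  · exact absurd hemp (Set.nonempty_iff_ne_empty.mp (hb c))
  have hrmem : r ∈ rIdeal b ∩ rIdeal c := by
    rw [hr]; exact ⟨1, (mul_one r).symm⟩
  obtain ⟨⟨p, hp_eq⟩, ⟨q, hq_eq⟩⟩ := hrmem
  have hr_core : r ∈ core S := by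
    intro s0
    obtain ⟨y, ⟨m, hm⟩, ⟨n, hn⟩⟩ := hb s0
    obtain ⟨z, ⟨j, hj⟩, ⟨i, hi⟩⟩ := hc y
    have hz : z ∈ rIdeal b ∩ rIdeal c := ⟨⟨m * i, by rw [hi, hm, mul_assoc]⟩, ⟨j, hj⟩⟩
    rw [hr] at hz
    obtain ⟨w, hw⟩ := hz
    exact ⟨z, ⟨w, hw⟩, ⟨n * i, by rw [hi, hn, mul_assoc]⟩⟩
  have hp_core : p ∈ core S := by
    intro s0
    obtain ⟨y, ⟨m, hm⟩, ⟨n, hn⟩⟩ := hr_core (b * s0)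
    have h1 : b * (p * m) = b * (s0 * n) := by
      rw [← mul_assoc, ← hp_eq, ← hm, hn, mul_assoc]
    exact ⟨p * m, ⟨m, rfl⟩, ⟨n, hS.1 b _ _ h1⟩⟩
  have hq_core : q ∈ core S := by
    intro s0
    obtain ⟨y, ⟨m, hm⟩, ⟨n, hn⟩⟩ := hr_core (c * s0)
    have h1 : c * (q * m) = c * (s0 * n) := by
      rw [← mul_assoc, ← hq_eq, ← hm, hn, mul_assoc]
    exact ⟨q * m, ⟨m, rfl⟩, ⟨n, hS.1 c _ _ h1⟩⟩
  refine ⟨a * p, core_mul' ha hp_core, d * q, core_mul' hd hq_core, ?_⟩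
  rw [← mul_assoc, hab, mul_assoc, ← hp_eq, hq_eq, ← mul_assoc, hcd, mul_assoc]

lemma eqvGen_coreEquiv (hS : IsRightLCMMonoid S) {α : Type*} {f : α → S} {x y : α}
    (h : Relation.EqvGen (fun a b => coreEquiv (f a) (f b)) x y) :
    coreEquiv (f x) (f y) := by
  induction h with
  | rel _ _ h => exact h
  | refl _ => exact coreEquiv_refl _
  | symm _ _ _ ih => exact coreEquiv_symm ih
  | trans _ _ _ _ _ ih1 ih2 => exact coreEquiv_trans hS ih1 ih2

lemma pnat_left_eq_one {k m : ℕ+} (h : k * m = 1) : k = 1 := by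
  have h' : (k : ℕ) * (m : ℕ) = 1 := by exact_mod_cast congrArg (fun x : ℕ+ => (x : ℕ)) h
  exact PNat.coe_injective (by simpa using Nat.eq_one_of_mul_eq_one_right h')

lemma N_eq_one_iff (hS : IsRightLCMMonoid S) {N : S →* ℕ+} (hN : IsGenScale N) (a : S) :
    N a = 1 ↔ a ∈ core S := by
  constructor
  · intro h1 s
    obtain ⟨t, ht1, x, ⟨p, hp⟩, ⟨q, hq⟩⟩ := hN.2.2.2 s 1 ⟨1, map_one N⟩
    have hcard := hN.2.1 1 ⟨1, map_one N⟩
    have hsub : Subsingleton (Quot fun x y : {s : S // N s = 1} => coreEquiv x.1 y.1) :=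
      (Nat.card_eq_one_iff_unique.mp (by simpa using hcard)).1
    have heq : (Quot.mk _ (⟨t, ht1⟩ : {s : S // N s = 1})) =
        Quot.mk (fun x y : {s : S // N s = 1} => coreEquiv x.1 y.1) ⟨a, h1⟩ :=
      Subsingleton.elim _ _
    have hco : coreEquiv t a :=
      eqvGen_coreEquiv hS (f := fun x : {s : S // N s = 1} => x.1) (Quot.eq.mp heq)
    obtain ⟨c, hc, d, hd, hcd⟩ := hco
    obtain ⟨y, ⟨m, hm⟩, ⟨k, hk⟩⟩ := hc q
    refine ⟨a * (d * m), ⟨d * m, rfl⟩, ⟨p * k, ?_⟩⟩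
    rw [← mul_assoc, ← hcd, mul_assoc, ← hm, hk, ← mul_assoc, ← hq, hp, mul_assoc]
  · intro ha
    have hcard := hN.2.1 (N a) ⟨a, rfl⟩
    have hsub : ∀ x : {s : S // N s = N a},
        Quot.mk _ x = Quot.mk (fun x y : {s : S // N s = N a} => coreEquiv x.1 y.1) ⟨a, rfl⟩ := by
      rintro ⟨t, ht⟩
      apply Quot.sound
      obtain ⟨y, ⟨m, hm⟩, ⟨k, hk⟩⟩ := ha t
      rcases hN.2.2.1 t a ht with h | h
      · exact h
      · exact absurd h (Set.nonempty_iff_ne_empty.mp ⟨y, ⟨k, hk⟩, ⟨m, hm⟩⟩)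
    have hone : Nat.card (Quot fun x y : {s : S // N s = N a} => coreEquiv x.1 y.1) = 1 := by
      rw [Nat.card_eq_one_iff_unique]
      refine ⟨⟨fun x y => ?_⟩, ⟨Quot.mk _ ⟨a, rfl⟩⟩⟩
      induction x using Quot.ind with | _ x' =>
      induction y using Quot.ind with | _ y' =>
      rw [hsub x', hsub y']
    rw [hcard] at hone
    exact PNat.coe_injective (by simpa using hone)

end Aux

theorem stmt14 [Monoid S] (hS : IsRightLCMMonoid S)
    (N : S →* ℕ+) (hN : IsGenScale N) (s : S) :
    IrrInScale N (N s) ↔ NoncoreIrred s := by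
  constructor
  · rintro ⟨hne, hirr⟩
    constructor
    · intro hs
      exact hne ((N_eq_one_iff hS hN s).mpr hs)
    · intro a ha t r h
      have hNa : N a = 1 := (N_eq_one_iff hS hN a).mpr ha
      have hmul : N s = N t * N r := by
        have h2 := congrArg N h
        rw [map_mul, map_mul, hNa, mul_one] at h2
        exact h2
      rcases hirr (N t) (N r) ⟨t, rfl⟩ ⟨r, rfl⟩ hmul with h1 | h1
      · exact Or.inl ((N_eq_one_iff hS hN t).mp h1)
      · exact Or.inr ((N_eq_one_iff hS hN r).mp h1)
  · rintro ⟨hs, hirr⟩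
    constructor
    · intro h1
      exact hs ((N_eq_one_iff hS hN s).mp h1)
    · rintro k l ⟨u, hu⟩ ⟨v, hv⟩ hkl
      obtain ⟨t, ht, x, ⟨a, hxa⟩, ⟨r0, hxr⟩⟩ := hN.2.2.2 s k ⟨u, hu⟩
      obtain ⟨v', hv', y, ⟨c, hyc⟩, ⟨d, hyd⟩⟩ := hN.2.2.2 r0 l ⟨v, hv⟩
      have hNtv : N (t * v') = N s := by rw [map_mul, ht, hv', hkl]
      have hnonempty : (rIdeal s ∩ rIdeal (t * v')).Nonempty := by
        refine ⟨s * (a * c), ⟨a * c, rfl⟩, ⟨d, ?_⟩⟩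
        rw [← mul_assoc, ← hxa, hxr, mul_assoc, ← hyc, hyd, ← mul_assoc]
      have hco : coreEquiv s (t * v') := by
        rcases hN.2.2.1 s (t * v') hNtv.symm with h | h
        · exact h
        · exact absurd h (Set.nonempty_iff_ne_empty.mp hnonempty)
      obtain ⟨e, he, f, hf, hef⟩ := hco
      rcases hirr e he t (v' * f) (by rw [hef, mul_assoc]) with h1 | h1
      · left
        rw [← ht]
        exact (N_eq_one_iff hS hN t).mpr h1
      · right
        have h2 : N (v' * f) = 1 := (N_eq_one_iff hS hN _).mpr h1
        rw [map_mul, hv'] at h2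
        exact pnat_left_eq_one h2
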